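/- Precomposition functors satisfy the Beck–Chevalley condition for left Kan extensions: given a pullback square of small categories with f : Γ → Δ, π_{E'} : Δ.E' → Δ, π_E : Γ.E → Γ and q : Γ.E → Δ.E' (where Γ.E is the strict pullback of π_{E'} along f), and V a cocomplete category, the canonical natural transformation Lan_{π_E} ∘ q* → f* ∘ Lan_{π_{E'}} is a natural isomorphism, where Lan denotes left Kan extension. -/

import Mathlib

/-!
The pullback square of Grothendieck constructions is exact in the sense of Guitart. Fix
`X₂ : Grothendieck F` and `g : X₂.base ⟶ f.obj γ`. A factorisation of `g` through the square
(an object `X₁` over `Γ`, an arrow `a : X₂ ⟶ pre X₁` and `b : X₁.base ⟶ γ` with `a.base ≫ f b = g`)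
can be pushed forward along `b` to a factorisation whose second leg is `𝟙 γ`, and every such
factorisation receives a map from the canonical one `(⟨γ, g_! X₂.fiber⟩, ⟨g, 𝟙⟩, 𝟙 γ)` given by the
cocartesian lift of `g`. Hence the categories of factorisations are connected.

For a Guitart exact square, the base change morphism between pointwise left Kan extensions is an
isomorphism, since both sides are colimits over comma categories related by a final functor. It
remains to identify the base change morphism with the mate of the identity 2-cell
`π_{E'}* ⋙ q* = f* ⋙ π_E*`.
-/

open CategoryTheory Limits

universe u

namespace CategoryTheory.TwoSquare

variable {C₁ C₂ C₃ C₄ : Type*} [Category C₁] [Category C₂] [Category C₃] [Category C₄]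
  {T : C₁ ⥤ C₂} {L : C₁ ⥤ C₃} {R : C₂ ⥤ C₄} {B : C₃ ⥤ C₄}

def whiskeringLeft (w : TwoSquare T L R B) (D : Type*) [Category D] :
    TwoSquare ((Functor.whiskeringLeft C₂ C₄ D).obj R) ((Functor.whiskeringLeft C₃ C₄ D).obj B)
      ((Functor.whiskeringLeft C₁ C₂ D).obj T) ((Functor.whiskeringLeft C₁ C₃ D).obj L) :=
  (Functor.whiskeringLeft C₁ C₄ D).map w.natTrans

lemma lanBaseChange_eq_mateEquiv_symm {D : Type*} [Category D]
    [∀ F : C₁ ⥤ D, L.HasLeftKanExtension F] [∀ F : C₂ ⥤ D, R.HasLeftKanExtension F]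
    (w : TwoSquare T L R B) :
    w.lanBaseChange (D := D) =
      (mateEquiv (R.lanAdjunction D) (L.lanAdjunction D)).symm (w.whiskeringLeft D) := by
  ext P : 2
  rw [lanBaseChange_app]
  refine ((L.lanAdjunction D).homEquiv _ _).symm_apply_eq.2 ?_
  rw [Adjunction.homEquiv_unit]
  refine Eq.trans ?_ (unit_mateEquiv_symm (R.lanAdjunction D) (L.lanAdjunction D)
    (G := (Functor.whiskeringLeft C₁ C₂ D).obj T) (H := (Functor.whiskeringLeft C₃ C₄ D).obj B)
    (w.whiskeringLeft D) P)
  ext X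
  simp only [Functor.id_obj, Functor.comp_obj, Functor.whiskeringLeft_obj_obj,
    Functor.LeftExtension.mk_hom, NatTrans.comp_app, Functor.associator_inv_app,
    Functor.whiskerRight_app, Functor.associator_hom_app, Category.comp_id, Category.id_comp,
    Functor.lanAdjunction_unit, Functor.whiskeringLeft_obj_map, Functor.whiskerLeft_app]
  rfl

end CategoryTheory.TwoSquare

namespace CategoryTheory.Grothendieck

variable {Γ Δ : Type*} [Category Γ] [Category Δ] (F : Δ ⥤ Cat) (f : Γ ⥤ Δ)

def preTwoSquare : TwoSquare (pre F f) (forget (f ⋙ F)) (forget F) f :=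
  TwoSquare.mk _ _ _ _ (𝟙 _)

lemma preTwoSquare_whiskeringLeft (D : Type*) [Category D] :
    (preTwoSquare F f).whiskeringLeft D = eqToHom rfl :=
  (Functor.whiskeringLeft _ _ D).map_id _

variable {F f} {X₂ : Grothendieck F} {γ : Γ}

def rightwardsTransport (g : X₂.base ⟶ f.obj γ) :
    (preTwoSquare F f).StructuredArrowRightwards g :=
  .mk (preTwoSquare F f) g (⟨γ, (F.map g).toFunctor.obj X₂.fiber⟩ : Grothendieck (f ⋙ F))
    ⟨g, 𝟙 _⟩ (𝟙 γ) (show g ≫ 𝟙 (f.obj γ) ≫ f.map (𝟙 γ) = g by simp)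

lemma zigzag_rightwardsTransport (g : X₂.base ⟶ f.obj γ) (X₁ : Grothendieck (f ⋙ F))
    (a : X₂ ⟶ (pre F f).obj X₁) (b : X₁.base ⟶ γ) (comm : a.base ≫ f.map b = g) :
    Zigzag (TwoSquare.StructuredArrowRightwards.mk (preTwoSquare F f) g X₁ a b
        ((congrArg (a.base ≫ ·) (Category.id_comp (f.map b))).trans comm))
      (rightwardsTransport g) := by
  let Y := TwoSquare.StructuredArrowRightwards.mk (preTwoSquare F f) g
    (⟨γ, (F.map (f.map b)).toFunctor.obj X₁.fiber⟩ : Grothendieck (f ⋙ F))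
    (a ≫ ⟨f.map b, 𝟙 _⟩) (𝟙 γ)
    (show (a.base ≫ f.map b) ≫ 𝟙 (f.obj γ) ≫ f.map (𝟙 γ) = g by simp [comm])
  refine Zigzag.trans (j₂ := Y) (.of_hom ?_) (.of_inv ?_)
  · exact StructuredArrow.homMk
      (CostructuredArrow.homMk ⟨b, 𝟙 _⟩ (show b ≫ 𝟙 γ = b by simp)) rfl
  have hfiber : ((f ⋙ F).map (𝟙 γ)).toFunctor.obj ((F.map g).toFunctor.obj X₂.fiber) =
      (F.map (f.map b)).toFunctor.obj ((F.map a.base).toFunctor.obj X₂.fiber) := by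
    subst comm
    simp
  let φ : (⟨γ, (F.map g).toFunctor.obj X₂.fiber⟩ : Grothendieck (f ⋙ F)) ⟶
      ⟨γ, (F.map (f.map b)).toFunctor.obj X₁.fiber⟩ :=
    ⟨𝟙 γ, eqToHom hfiber ≫ (F.map (f.map b)).toFunctor.map a.fiber⟩
  refine StructuredArrow.homMk (CostructuredArrow.homMk φ (Category.id_comp _)) ?_
  apply CostructuredArrow.hom_ext
  show (⟨g, 𝟙 _⟩ : X₂ ⟶ (pre F f).obj ⟨γ, (F.map g).toFunctor.obj X₂.fiber⟩) ≫ (pre F f).map φ =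
    a ≫ (⟨f.map b, 𝟙 _⟩ :
      (pre F f).obj X₁ ⟶ (pre F f).obj ⟨γ, (F.map (f.map b)).toFunctor.obj X₁.fiber⟩)
  fapply Grothendieck.ext
  · simp [φ, comm]
  · simp only [φ, comp_fiber, pre_map_fiber, Functor.map_id, Category.id_comp,
      Category.comp_id, eqToHom_trans_assoc]

variable (F f) in
instance guitartExact_preTwoSquare : (preTwoSquare F f).GuitartExact := by
  rw [TwoSquare.guitartExact_iff_isConnected_rightwards]
  intro X₂ γ g
  have zigzag (Y : (preTwoSquare F f).StructuredArrowRightwards g) :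
      Zigzag Y (rightwardsTransport g) := by
    obtain ⟨X₁, a, b, comm, rfl⟩ := TwoSquare.StructuredArrowRightwards.mk_surjective Y
    exact zigzag_rightwardsTransport g X₁ a b
      ((congrArg (a.base ≫ ·) (Category.id_comp _)).symm.trans comm)
  have : Nonempty ((preTwoSquare F f).StructuredArrowRightwards g) := ⟨rightwardsTransport g⟩
  exact zigzag_isConnected fun Y Z ↦ (zigzag Y).trans (zigzag_symm.symm _ _ (zigzag Z))

end CategoryTheory.Grothendieck

open Grothendieck in
/-- Beck–Chevalley for left Kan extensions along precomposition: Let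
`f : Γ ⥤ Δ` be a functor of small categories and `E' : Δ ⥤ Gpd` a groupoid-valued
functor, so that `π_{E'} = forget : Δ.E' ⥤ Δ` is a Grothendieck (op)fibration, and let
`Γ.E` be the strict pullback of `π_{E'}` along `f` (the Grothendieck construction of
`f ⋙ E'`), with `π_E : Γ.E ⥤ Γ` and `q : Γ.E ⥤ Δ.E'`.  For a cocomplete category `V`,
the canonical natural transformation `Lan_{π_E} ∘ q* ⟶ f* ∘ Lan_{π_{E'}}` (the mate of
the identification `π_{E'}* ⋙ q* = f* ⋙ π_E*` coming from the commuting square) is a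
natural isomorphism. -/
theorem beck_chevalley_lan
    (Γ Δ : Type u) [SmallCategory Γ] [SmallCategory Δ] (f : Γ ⥤ Δ)
    (E' : Δ ⥤ Grpd.{u, u})
    (V : Type (u + 1)) [Category.{u} V] [HasColimitsOfSize.{u, u} V] :
    IsIso
      ((mateEquiv
          (Functor.lanAdjunction (Grothendieck.forget (E' ⋙ Grpd.forgetToCat)) V)
          (Functor.lanAdjunction (Grothendieck.forget (f ⋙ E' ⋙ Grpd.forgetToCat)) V)
          (G := (Functor.whiskeringLeft _ _ V).obj (Grothendieck.pre (E' ⋙ Grpd.forgetToCat) f))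
          (H := (Functor.whiskeringLeft Γ Δ V).obj f)).symm
        (eqToHom rfl)) := by
  have h := (preTwoSquare (E' ⋙ Grpd.forgetToCat) f).lanBaseChange_eq_mateEquiv_symm (D := V)
  rw [preTwoSquare_whiskeringLeft] at h
  exact h ▸ inferInstance
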